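/- Let λ ∈ ℂ with λ_i = Im λ > 0 and f ∈ L²((-∞, a]; H). Then for almost every t ≤ a the function s ↦ e^{−iλ(t−s)} exp(i(t−s)A) f(s) is Bochner integrable on (t, a), and the function u(t) = ∫_t^a e^{−iλ(t−s)} exp(i(t−s)A) f(s) ds belongs to L²((-∞, a]; H) with ‖u‖_{L²((-∞,a];H)} ≤ (1/λ_i) ‖f‖_{L²((-∞,a];H)}. -/

import Mathlib

open MeasureTheory Set Complex
open scoped InnerProductSpace ENNReal

/-- The operator exponential `exp(iτA)` for a bounded operator `A` and `τ ∈ ℝ`. -/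
noncomputable def expIA {H : Type*} [NormedAddCommGroup H] [InnerProductSpace ℂ H]
    [CompleteSpace H] (A : H →L[ℂ] H) (τ : ℝ) : H →L[ℂ] H :=
  NormedSpace.exp ((Complex.I * (τ : ℂ)) • A)

/-! Since `exp(iτA)` is unitary, the integrand has norm `e^{-Im λ (s - t)} ‖f s‖`, so `‖u‖` is
dominated pointwise by the convolution of `‖f‖` with `k(r) = e^{-Im λ r} 1_{r > 0}`, a kernel of
total mass `1 / Im λ`. Schur's test (Cauchy–Schwarz against the kernel, then Tonelli) bounds such
a convolution on `L²` by the mass of the kernel. -/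

namespace ENNReal

variable {α β : Type*} [MeasurableSpace α] [MeasurableSpace β] {μ : Measure α} {ν : Measure β}

theorem sq_lintegral_mul_le {k φ : α → ℝ≥0∞} (hk : AEMeasurable k μ) (hφ : AEMeasurable φ μ) :
    (∫⁻ x, k x * φ x ∂μ) ^ 2 ≤ (∫⁻ x, k x ∂μ) * ∫⁻ x, k x * φ x ^ 2 ∂μ := by
  have hsqrt : ∀ x, (k x ^ (2⁻¹ : ℝ)) ^ 2 = k x := fun x => by
    rw [← rpow_two, ← rpow_mul]; norm_num
  have holder := lintegral_mul_le_Lp_mul_Lq μ Real.HolderConjugate.two_two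
    (hk.pow_const (2⁻¹ : ℝ)) ((hk.pow_const (2⁻¹ : ℝ)).mul hφ)
  simp only [Pi.mul_apply, ← mul_assoc, ← sq, hsqrt, rpow_two, mul_pow] at holder
  calc (∫⁻ x, k x * φ x ∂μ) ^ 2
      ≤ ((∫⁻ x, k x ∂μ) ^ (1 / 2 : ℝ) * (∫⁻ x, k x * φ x ^ 2 ∂μ) ^ (1 / 2 : ℝ)) ^ 2 :=
        pow_le_pow_left' holder 2
    _ = (∫⁻ x, k x ∂μ) * ∫⁻ x, k x * φ x ^ 2 ∂μ := by
        rw [mul_pow, ← rpow_two, ← rpow_two, ← rpow_mul, ← rpow_mul]; norm_num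

theorem lintegral_sq_lintegral_mul_le_of_schur [SFinite μ] [SFinite ν] {k : α → β → ℝ≥0∞}
    (hk : Measurable (Function.uncurry k)) {φ : β → ℝ≥0∞} (hφ : AEMeasurable φ ν)
    {C₁ C₂ : ℝ≥0∞} (hrow : ∀ x, ∫⁻ y, k x y ∂ν ≤ C₁) (hcol : ∀ y, ∫⁻ x, k x y ∂μ ≤ C₂) :
    ∫⁻ x, (∫⁻ y, k x y * φ y ∂ν) ^ 2 ∂μ ≤ C₁ * C₂ * ∫⁻ y, φ y ^ 2 ∂ν := by
  wlog hφm : Measurable φ generalizing φ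
  · have hφ_mk : ∀ x, ∫⁻ y, k x y * φ y ∂ν = ∫⁻ y, k x y * hφ.mk φ y ∂ν := fun x =>
      lintegral_congr_ae (hφ.ae_eq_mk.mono fun y hy => congrArg (k x y * ·) hy)
    have hφ_mk_sq : ∫⁻ y, φ y ^ 2 ∂ν = ∫⁻ y, hφ.mk φ y ^ 2 ∂ν :=
      lintegral_congr_ae (hφ.ae_eq_mk.mono fun y hy => congrArg (· ^ 2) hy)
    simpa only [hφ_mk, hφ_mk_sq] using this hφ.measurable_mk.aemeasurable hφ.measurable_mk
  have hk_left : ∀ x, Measurable (k x) := fun x => hk.of_uncurry_left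
  have hkφ : Measurable (Function.uncurry fun x y => k x y * φ y ^ 2) :=
    hk.mul ((hφm.pow_const 2).comp measurable_snd)
  calc ∫⁻ x, (∫⁻ y, k x y * φ y ∂ν) ^ 2 ∂μ
      ≤ ∫⁻ x, C₁ * ∫⁻ y, k x y * φ y ^ 2 ∂ν ∂μ := lintegral_mono fun x =>
        (sq_lintegral_mul_le (hk_left x).aemeasurable hφ).trans (by gcongr; exact hrow x)
    _ = C₁ * ∫⁻ y, ∫⁻ x, k x y * φ y ^ 2 ∂μ ∂ν := by
        rw [lintegral_const_mul'' _ ?_, lintegral_lintegral_swap hkφ.aemeasurable]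
        exact hkφ.lintegral_prod_right'.aemeasurable
    _ = C₁ * ∫⁻ y, (∫⁻ x, k x y ∂μ) * φ y ^ 2 ∂ν := by
        simp_rw [lintegral_mul_const _ hk.of_uncurry_right]
    _ ≤ C₁ * ∫⁻ y, C₂ * φ y ^ 2 ∂ν := by gcongr with y; exact hcol y
    _ = C₁ * C₂ * ∫⁻ y, φ y ^ 2 ∂ν := by rw [lintegral_const_mul _ (hφm.pow_const 2), mul_assoc]

end ENNReal

theorem sq_eLpNorm_two {α E : Type*} [MeasurableSpace α] {μ : Measure α} [NormedAddCommGroup E]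
    (f : α → E) : eLpNorm f 2 μ ^ 2 = ∫⁻ x, ‖f x‖ₑ ^ 2 ∂μ := by
  simpa [ENNReal.rpow_two] using eLpNorm_nnreal_pow_eq_lintegral (f := f) (μ := μ) two_ne_zero

theorem eLpNorm_two_le_of_lintegral_sq_le {α E F : Type*} [MeasurableSpace α] {μ : Measure α}
    [NormedAddCommGroup E] [NormedAddCommGroup F] {u : α → E} {f : α → F} {C : ℝ≥0∞}
    (h : ∫⁻ x, ‖u x‖ₑ ^ 2 ∂μ ≤ C ^ 2 * ∫⁻ x, ‖f x‖ₑ ^ 2 ∂μ) :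
    eLpNorm u 2 μ ≤ C * eLpNorm f 2 μ := by
  rwa [← ENNReal.pow_le_pow_left_iff two_ne_zero, mul_pow, sq_eLpNorm_two, sq_eLpNorm_two]

noncomputable def expDecayKernel (b : ℝ) : ℝ → ℝ≥0∞ :=
  (Ioi 0).indicator fun r => ENNReal.ofReal (Real.exp (-b * r))

theorem measurable_expDecayKernel (b : ℝ) : Measurable (expDecayKernel b) :=
  (by fun_prop : Measurable fun r : ℝ => ENNReal.ofReal (Real.exp (-b * r))).indicator
    measurableSet_Ioi

theorem lintegral_expDecayKernel {b : ℝ} (hb : 0 < b) :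
    ∫⁻ r, expDecayKernel b r = ENNReal.ofReal (1 / b) := by
  rw [expDecayKernel, lintegral_indicator measurableSet_Ioi,
    ← ofReal_integral_eq_lintegral_ofReal (exp_neg_integrableOn_Ioi 0 hb)
      (.of_forall fun r => (Real.exp_pos _).le),
    integral_exp_mul_Ioi (neg_lt_zero.mpr hb)]
  congr 1
  simp [div_neg, neg_div]

section Volterra

variable {𝕜 E F : Type*} [NontriviallyNormedField 𝕜] [NormedAddCommGroup E] [NormedSpace 𝕜 E]
  [NormedAddCommGroup F] [NormedSpace 𝕜 F] {G : ℝ → E →L[𝕜] F} {a b : ℝ}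
  {f : ℝ → E}

theorem enorm_apply_le_expDecayKernel
    (hGle : ∀ τ < 0, ∀ x, ‖G τ x‖ ≤ Real.exp (b * τ) * ‖x‖) {t s : ℝ} (hts : t < s) (x : E) :
    ‖G (t - s) x‖ₑ ≤ expDecayKernel b (s - t) * ‖x‖ₑ := by
  rw [expDecayKernel, indicator_of_mem (mem_Ioi.mpr (sub_pos.mpr hts)), ← ofReal_norm,
    ← ofReal_norm, ← ENNReal.ofReal_mul (Real.exp_pos _).le, neg_mul, ← mul_neg, neg_sub]
  exact ENNReal.ofReal_le_ofReal (hGle _ (sub_neg.mpr hts) x)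

theorem integrableOn_Ioo_volterra (hG : Continuous G) (hb : 0 ≤ b)
    (hGle : ∀ τ < 0, ∀ x, ‖G τ x‖ ≤ Real.exp (b * τ) * ‖x‖) {t : ℝ}
    (hf : IntegrableOn f (Ioo t a)) : IntegrableOn (fun s => G (t - s) (f s)) (Ioo t a) := by
  refine hf.norm.mono' ?_ ?_
  · exact (ContinuousLinearMap.apply 𝕜 F).aestronglyMeasurable_comp₂ hf.aestronglyMeasurable
      (hG.comp (continuous_const.sub continuous_id)).aestronglyMeasurable
  · filter_upwards [ae_restrict_mem measurableSet_Ioo] with s hs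
    have hτ : t - s < 0 := sub_neg.mpr hs.1
    calc ‖G (t - s) (f s)‖ ≤ Real.exp (b * (t - s)) * ‖f s‖ := hGle _ hτ _
      _ ≤ ‖f s‖ := mul_le_of_le_one_left (norm_nonneg _)
        (Real.exp_le_one_iff.mpr (mul_nonpos_of_nonneg_of_nonpos hb hτ.le))

theorem enorm_integral_Ioo_volterra_le [NormedSpace ℝ F]
    (hGle : ∀ τ < 0, ∀ x, ‖G τ x‖ ≤ Real.exp (b * τ) * ‖x‖) (t : ℝ) :
    ‖∫ s in Ioo t a, G (t - s) (f s)‖ₑ ≤ ∫⁻ s in Iic a, expDecayKernel b (s - t) * ‖f s‖ₑ :=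
  calc ‖∫ s in Ioo t a, G (t - s) (f s)‖ₑ ≤ ∫⁻ s in Ioo t a, ‖G (t - s) (f s)‖ₑ :=
        enorm_integral_le_lintegral_enorm _
    _ ≤ ∫⁻ s in Ioo t a, expDecayKernel b (s - t) * ‖f s‖ₑ :=
        setLIntegral_mono' measurableSet_Ioo fun _ hs => enorm_apply_le_expDecayKernel hGle hs.1 _
    _ ≤ ∫⁻ s in Iic a, expDecayKernel b (s - t) * ‖f s‖ₑ :=
        lintegral_mono_set fun _ hs => hs.2.le

theorem aestronglyMeasurable_integral_Ioo_volterra [NormedSpace ℝ F] (hG : Continuous G)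
    (hf : AEStronglyMeasurable f (volume.restrict (Iic a))) :
    AEStronglyMeasurable (fun t => ∫ s in Ioo t a, G (t - s) (f s)) (volume.restrict (Iic a)) := by
  set S : Set (ℝ × ℝ) := {p | p.1 < p.2 ∧ p.2 < a}
  have hS : MeasurableSet S := (measurableSet_lt measurable_fst measurable_snd).inter
    (measurableSet_lt measurable_snd measurable_const)
  have hint : AEStronglyMeasurable (S.indicator fun p => G (p.1 - p.2) (f p.2))
      ((volume.restrict (Iic a)).prod (volume.restrict (Iic a))) :=
    ((ContinuousLinearMap.apply 𝕜 F).aestronglyMeasurable_comp₂ hf.comp_snd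
      (hG.comp (continuous_fst.sub continuous_snd)).aestronglyMeasurable).indicator hS
  refine hint.integral_prod_right'.congr (.of_forall fun t => ?_)
  -- the slice of `S` at `t` is `Ioo t a`
  change ∫ s in Iic a, (Ioo t a).indicator (fun s => G (t - s) (f s)) s = _
  rw [integral_indicator measurableSet_Ioo, Measure.restrict_restrict measurableSet_Ioo,
    inter_eq_left.mpr fun _ hs => hs.2.le]

theorem eLpNorm_integral_Ioo_volterra_le [NormedSpace ℝ F] (hb : 0 < b)
    (hGle : ∀ τ < 0, ∀ x, ‖G τ x‖ ≤ Real.exp (b * τ) * ‖x‖)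
    (hf : AEStronglyMeasurable f (volume.restrict (Iic a))) :
    eLpNorm (fun t => ∫ s in Ioo t a, G (t - s) (f s)) 2 (volume.restrict (Iic a))
      ≤ ENNReal.ofReal (1 / b) * eLpNorm f 2 (volume.restrict (Iic a)) := by
  have hk : Measurable (Function.uncurry fun t s : ℝ => expDecayKernel b (s - t)) :=
    (measurable_expDecayKernel b).comp (measurable_snd.sub measurable_fst)
  have hrow (t : ℝ) : ∫⁻ s in Iic a, expDecayKernel b (s - t) ≤ ENNReal.ofReal (1 / b) := by
    rw [← lintegral_expDecayKernel hb, ← lintegral_sub_right_eq_self (expDecayKernel b) t]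
    exact setLIntegral_le_lintegral _ _
  have hcol (s : ℝ) : ∫⁻ t in Iic a, expDecayKernel b (s - t) ≤ ENNReal.ofReal (1 / b) := by
    rw [← lintegral_expDecayKernel hb, ← lintegral_sub_left_eq_self (expDecayKernel b) s]
    exact setLIntegral_le_lintegral _ _
  refine eLpNorm_two_le_of_lintegral_sq_le ?_
  calc ∫⁻ t in Iic a, ‖∫ s in Ioo t a, G (t - s) (f s)‖ₑ ^ 2
      ≤ ∫⁻ t in Iic a, (∫⁻ s in Iic a, expDecayKernel b (s - t) * ‖f s‖ₑ) ^ 2 :=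
        lintegral_mono fun t => pow_le_pow_left' (enorm_integral_Ioo_volterra_le hGle t) 2
    _ ≤ ENNReal.ofReal (1 / b) ^ 2 * ∫⁻ s in Iic a, ‖f s‖ₑ ^ 2 := by
        rw [sq]
        exact ENNReal.lintegral_sq_lintegral_mul_le_of_schur hk hf.enorm hrow hcol

end Volterra

section expIA

variable {H : Type*} [NormedAddCommGroup H] [InnerProductSpace ℂ H] [CompleteSpace H]
  {A : H →L[ℂ] H}

theorem expIA_mem_unitary (hA : IsSelfAdjoint A) (τ : ℝ) : expIA A τ ∈ unitary (H →L[ℂ] H) := by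
  have hτA : IsSelfAdjoint ((τ : ℂ) • A) := by
    rw [IsSelfAdjoint, star_smul, Complex.star_def, Complex.conj_ofReal, hA.star_eq]
  -- the `NormedSpace.exp` API is stated for `ℚ`-algebras
  let +nondep : NormedAlgebra ℚ (H →L[ℂ] H) := .restrictScalars ℚ ℂ (H →L[ℂ] H)
  rw [expIA, mul_smul]
  exact NormedSpace.exp_mem_unitary_of_mem_skewAdjoint (hτA.smul_mem_skewAdjoint Complex.conj_I)

theorem norm_expIA_apply (hA : IsSelfAdjoint A) (τ : ℝ) (x : H) : ‖expIA A τ x‖ = ‖x‖ :=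
  ContinuousLinearMap.norm_map_of_mem_unitary (expIA_mem_unitary hA τ) x

theorem continuous_expIA (A : H →L[ℂ] H) : Continuous (expIA A) := by
  let +nondep : NormedAlgebra ℚ (H →L[ℂ] H) := .restrictScalars ℚ ℂ (H →L[ℂ] H)
  exact NormedSpace.exp_continuous.comp (by fun_prop)

end expIA

theorem norm_exp_neg_I_mul_mul_ofReal (lam : ℂ) (τ : ℝ) :
    ‖Complex.exp (-I * lam * τ)‖ = Real.exp (lam.im * τ) := by
  simp [Complex.norm_exp, Complex.mul_re]

/-- For `Im λ > 0` and `f ∈ L²((-∞, a]; H)`, for a.e. `t ≤ a` the integrand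
`s ↦ e^{−iλ(t−s)} exp(i(t−s)A) f(s)` is Bochner integrable on `(t, a)`, and
`u(t) = ∫_t^a e^{−iλ(t−s)} exp(i(t−s)A) f(s) ds` lies in `L²((-∞, a]; H)` with
`‖u‖ ≤ (1/Im λ) ‖f‖`. -/
theorem volterra_bound_left_halfline_upper
    {H : Type*} [NormedAddCommGroup H] [InnerProductSpace ℂ H] [CompleteSpace H]
    (A : H →L[ℂ] H) (hA : IsSelfAdjoint A) (a : ℝ) (lam : ℂ) (hlam : 0 < lam.im)
    (f : ℝ → H) (hf : MemLp f 2 (volume.restrict (Set.Iic a)))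
    (u : ℝ → H)
    (hu : u = fun t : ℝ => ∫ s in Set.Ioo t a,
      Complex.exp (-Complex.I * lam * ((t : ℂ) - (s : ℂ))) • (expIA A (t - s)) (f s)) :
    (∀ᵐ (t : ℝ) ∂(volume.restrict (Set.Iic a)),
      IntegrableOn (fun s : ℝ =>
        Complex.exp (-Complex.I * lam * ((t : ℂ) - (s : ℂ))) • (expIA A (t - s)) (f s))
        (Set.Ioo t a) volume)
    ∧ MemLp u 2 (volume.restrict (Set.Iic a))
    ∧ eLpNorm u 2 (volume.restrict (Set.Iic a))
        ≤ ENNReal.ofReal (1 / lam.im) * eLpNorm f 2 (volume.restrict (Set.Iic a)) := by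
  set G : ℝ → H →L[ℂ] H := fun τ => Complex.exp (-I * lam * τ) • expIA A τ
  have hG : Continuous G := by have := continuous_expIA A; fun_prop
  have hGle (τ : ℝ) (_ : τ < 0) (x : H) : ‖G τ x‖ ≤ Real.exp (lam.im * τ) * ‖x‖ := by
    rw [smul_apply, norm_smul, norm_exp_neg_I_mul_mul_ofReal, norm_expIA_apply hA]
  have hG_apply (t s : ℝ) (x : H) :
      Complex.exp (-I * lam * ((t : ℂ) - (s : ℂ))) • expIA A (t - s) x = G (t - s) x := by
    simp [G]
  simp only [hG_apply] at hu ⊢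
  subst hu
  have hbound := eLpNorm_integral_Ioo_volterra_le hlam hGle hf.1
  refine ⟨ae_of_all _ fun t => integrableOn_Ioo_volterra hG hlam.le hGle ?_,
    ⟨aestronglyMeasurable_integral_Ioo_volterra hG hf.1,
      hbound.trans_lt (ENNReal.mul_lt_top ENNReal.ofReal_lt_top hf.2)⟩, hbound⟩
  exact (hf.mono_measure (Measure.restrict_mono_set volume fun _ hs => hs.2.le)).integrable
    one_le_two
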